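/- Let d ≥ 1. There exists a constant C > 0, depending only on d, with the following property: for all real numbers γ, γ' with 0 ≤ γ' < γ ≤ 1, all M, N ≥ 0, and all matrices A, B : ℤ^d × ℤ^d → ℂ satisfying |A(a,b)| ≤ M e^{−γ|a−b|} and |B(a,b)| ≤ N e^{−γ'|a−b|} for all a, b ∈ ℤ^d, one has for all a, b ∈ ℤ^d: Σ_{k∈ℤ^d} |A(a,k)| |B(k,b)| < ∞, |Σ_{k∈ℤ^d} A(a,k) B(k,b)| ≤ C (γ − γ')^{−d} M N e^{−γ'|a−b|}, and likewise |Σ_{k∈ℤ^d} B(a,k) A(k,b)| ≤ C (γ − γ')^{−d} M N e^{−γ'|a−b|}. -/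

import Mathlib

/-!
Split `e^{-γ|a-k|} = e^{-γ'|a-k|} e^{-(γ-γ')|a-k|}`; by the triangle inequality
`e^{-γ'|a-k|} e^{-γ'|k-b|} ≤ e^{-γ'|a-b|}`, so the sum over `k` is at most
`M N e^{-γ'|a-b|} ∑_m e^{-ε|m|}` with `ε = γ - γ'`. Since `|m_1| + ⋯ + |m_d| ≤ d |m|`, the
lattice sum is dominated by the `d`-th power of the one-dimensional sum
`∑_n e^{-x|n|} = (1 + e^{-x}) / (1 - e^{-x}) ≤ 1 + 2/x`, taken at `x = ε / (d + 1)`.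
The product `BA` is handled by transposing both matrices.
-/

/-- The lattice point `a ∈ ℤ^d` viewed as a vector in Euclidean space `ℝ^d`. -/
noncomputable def latt {d : ℕ} (a : Fin d → ℤ) : EuclideanSpace ℝ (Fin d) :=
  WithLp.toLp 2 (fun i => (a i : ℝ))

open Real Finset

lemma sum_prod_apply_le_tsum_pow {ι β : Type*} [Fintype ι] {g : β → ℝ} (hg0 : 0 ≤ g)
    (hg : Summable g) (u : Finset (ι → β)) :
    ∑ m ∈ u, ∏ i, g (m i) ≤ (∑' n, g n) ^ Fintype.card ι := by
  classical
  let T : Finset β := univ.biUnion fun i => u.image (· i)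
  have hu : u ⊆ Fintype.piFinset fun _ => T := fun m hm =>
    Fintype.mem_piFinset.2 fun i => mem_biUnion.2 ⟨i, mem_univ _, mem_image_of_mem _ hm⟩
  calc ∑ m ∈ u, ∏ i, g (m i) ≤ ∑ m ∈ Fintype.piFinset fun _ => T, ∏ i, g (m i) :=
        sum_le_sum_of_subset_of_nonneg hu fun _ _ _ => prod_nonneg fun _ _ => hg0 _
    _ = (∑ n ∈ T, g n) ^ Fintype.card ι := by rw [← prod_univ_sum, prod_const, card_univ]
    _ ≤ (∑' n, g n) ^ Fintype.card ι := by
        gcongr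
        · exact sum_nonneg fun _ _ => hg0 _
        · exact hg.sum_le_tsum T fun _ _ => hg0 _

lemma summable_prod_apply {ι β : Type*} [Fintype ι] {g : β → ℝ} (hg0 : 0 ≤ g)
    (hg : Summable g) : Summable fun m : ι → β => ∏ i, g (m i) :=
  summable_of_sum_le (fun _ => prod_nonneg fun _ _ => hg0 _) (sum_prod_apply_le_tsum_pow hg0 hg)

lemma tsum_prod_apply_le_tsum_pow {ι β : Type*} [Fintype ι] {g : β → ℝ} (hg0 : 0 ≤ g)
    (hg : Summable g) : ∑' m : ι → β, ∏ i, g (m i) ≤ (∑' n, g n) ^ Fintype.card ι :=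
  Real.tsum_le_of_sum_le (fun _ => prod_nonneg fun _ _ => hg0 _)
    (sum_prod_apply_le_tsum_pow hg0 hg)

lemma hasSum_pow_natAbs {r : ℝ} (h0 : 0 ≤ r) (h1 : r < 1) :
    HasSum (fun n : ℤ => r ^ n.natAbs) ((1 + r) / (1 - r)) := by
  have hgeo := hasSum_geometric_of_lt_one h0 h1
  have h1r : 1 - r ≠ 0 := (sub_pos.2 h1).ne'
  have hsum : (1 + r) / (1 - r) = (1 - r)⁻¹ + (1 - r)⁻¹ - r ^ (0 : ℤ).natAbs := by
    field_simp
    ring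
  rw [hsum]
  exact .of_nat_of_neg (by simpa using hgeo) (by simpa using hgeo)

lemma exp_neg_mul_abs_intCast (x : ℝ) (n : ℤ) :
    exp (-x * |(n : ℝ)|) = exp (-x) ^ n.natAbs := by
  rw [← exp_nat_mul, Nat.cast_natAbs, Int.cast_abs]
  ring_nf

lemma hasSum_exp_neg_mul_abs_intCast {x : ℝ} (hx : 0 < x) :
    HasSum (fun n : ℤ => exp (-x * |(n : ℝ)|)) ((1 + exp (-x)) / (1 - exp (-x))) := by
  simp_rw [exp_neg_mul_abs_intCast]
  exact hasSum_pow_natAbs (exp_nonneg _) (exp_lt_one_iff.2 (neg_lt_zero.2 hx))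

lemma one_add_exp_neg_div_one_sub_exp_neg_le {x : ℝ} (hx : 0 < x) :
    (1 + exp (-x)) / (1 - exp (-x)) ≤ 1 + 2 / x := by
  have hx' : x ≤ exp x - 1 := by linarith [add_one_le_exp x]
  have key : (1 + exp (-x)) / (1 - exp (-x)) = 1 + 2 / (exp x - 1) := by
    have : exp x - 1 ≠ 0 := by linarith
    rw [exp_neg]
    field_simp
    ring
  rw [key]
  gcongr

lemma exp_mul_exp_le_of_dist {X : Type*} [PseudoMetricSpace X] {γ γ' : ℝ} (hγ' : 0 ≤ γ')
    (x y z : X) :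
    exp (-γ * dist x z) * exp (-γ' * dist z y) ≤
      exp (-γ' * dist x y) * exp (-(γ - γ') * dist x z) := by
  rw [← exp_add, ← exp_add, exp_le_exp]
  nlinarith [mul_le_mul_of_nonneg_left (dist_triangle x z y) hγ']

section Lattice

variable {d : ℕ}

lemma latt_sub (a b : Fin d → ℤ) : latt (a - b) = latt a - latt b := by
  ext i
  simp [latt]

lemma norm_latt_sub (a b : Fin d → ℤ) : ‖latt (a - b)‖ = dist (latt a) (latt b) := by
  rw [latt_sub, dist_eq_norm]

lemma exp_neg_mul_norm_latt_le_prod {x ε : ℝ} (hx : 0 ≤ x) (hxε : d * x ≤ ε)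
    (m : Fin d → ℤ) : exp (-ε * ‖latt m‖) ≤ ∏ i, exp (-x * |(m i : ℝ)|) := by
  rw [← exp_sum, exp_le_exp, ← Finset.mul_sum]
  have hsum : ∑ i, |(m i : ℝ)| ≤ d * ‖latt m‖ := by
    have hcoord (i : Fin d) : |(m i : ℝ)| ≤ ‖latt m‖ := PiLp.norm_apply_le (latt m) i
    simpa using Finset.sum_le_sum fun i (_ : i ∈ univ) => hcoord i
  nlinarith [norm_nonneg (latt m), mul_le_mul_of_nonneg_left hsum hx]

lemma summable_and_tsum_exp_neg_mul_norm_latt_le {ε : ℝ} (hε : 0 < ε) :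
    Summable (fun m : Fin d → ℤ => exp (-ε * ‖latt m‖)) ∧
      ∑' m : Fin d → ℤ, exp (-ε * ‖latt m‖) ≤ (1 + 2 * (d + 1) / ε) ^ d := by
  set x := ε / (d + 1)
  have hx : 0 < x := by positivity
  have hxε : d * x ≤ ε := by
    rw [mul_div_assoc', div_le_iff₀ (by positivity)]
    nlinarith
  have hg := hasSum_exp_neg_mul_abs_intCast hx
  have hg0 : 0 ≤ fun n : ℤ => exp (-x * |(n : ℝ)|) := fun _ => (exp_pos _).le
  have hle := exp_neg_mul_norm_latt_le_prod hx.le hxε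
  have hprod := summable_prod_apply hg0 hg.summable (ι := Fin d)
  have hsum := hprod.of_nonneg_of_le (fun _ => (exp_pos _).le) hle
  refine ⟨hsum, ?_⟩
  calc ∑' m : Fin d → ℤ, exp (-ε * ‖latt m‖)
      ≤ ∑' m : Fin d → ℤ, ∏ i, exp (-x * |(m i : ℝ)|) := hsum.tsum_le_tsum hle hprod
    _ ≤ (1 + 2 / x) ^ d := by
        refine (tsum_prod_apply_le_tsum_pow hg0 hg.summable).trans ?_
        rw [Fintype.card_fin, hg.tsum_eq]
        exact pow_le_pow_left₀ (hg.nonneg hg0) (one_add_exp_neg_div_one_sub_exp_neg_le hx) d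
    _ = (1 + 2 * (d + 1) / ε) ^ d := by
        simp only [x]
        field_simp

def ExpDecay (γ M : ℝ) (A : (Fin d → ℤ) → (Fin d → ℤ) → ℂ) : Prop :=
  ∀ a b, ‖A a b‖ ≤ M * exp (-γ * ‖latt (a - b)‖)

variable {γ γ' M N : ℝ} {A B : (Fin d → ℤ) → (Fin d → ℤ) → ℂ}

lemma ExpDecay.transpose (hA : ExpDecay γ M A) : ExpDecay γ M fun a b => A b a :=
  fun a b => by simpa only [norm_latt_sub, dist_comm] using hA b a

lemma ExpDecay.norm_mul_norm_le (hγ' : 0 ≤ γ') (hM : 0 ≤ M) (hN : 0 ≤ N)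
    (hA : ExpDecay γ M A) (hB : ExpDecay γ' N B) (a b k : Fin d → ℤ) :
    ‖A a k‖ * ‖B k b‖ ≤
      M * N * exp (-γ' * ‖latt (a - b)‖) * exp (-(γ - γ') * ‖latt (a - k)‖) := by
  calc ‖A a k‖ * ‖B k b‖
      ≤ (M * exp (-γ * ‖latt (a - k)‖)) * (N * exp (-γ' * ‖latt (k - b)‖)) :=
        mul_le_mul (hA a k) (hB k b) (norm_nonneg _) (by positivity)
    _ = M * N * (exp (-γ * ‖latt (a - k)‖) * exp (-γ' * ‖latt (k - b)‖)) := by ring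
    _ ≤ M * N * (exp (-γ' * ‖latt (a - b)‖) * exp (-(γ - γ') * ‖latt (a - k)‖)) := by
        simp only [norm_latt_sub]
        exact mul_le_mul_of_nonneg_left (exp_mul_exp_le_of_dist hγ' _ _ _) (by positivity)
    _ = _ := by ring

lemma ExpDecay.summable_and_norm_tsum_mul_le (hγ' : 0 ≤ γ') (hlt : γ' < γ) (hγ : γ ≤ 1)
    (hM : 0 ≤ M) (hN : 0 ≤ N) (hA : ExpDecay γ M A) (hB : ExpDecay γ' N B) (a b : Fin d → ℤ) :
    Summable (fun k => ‖A a k‖ * ‖B k b‖) ∧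
      ‖∑' k, A a k * B k b‖ ≤
        (3 * (d + 1)) ^ d * (γ - γ') ^ (-(d : ℝ)) * M * N * exp (-γ' * ‖latt (a - b)‖) := by
  have hε : 0 < γ - γ' := sub_pos.2 hlt
  obtain ⟨hF, hF_le⟩ := summable_and_tsum_exp_neg_mul_norm_latt_le (d := d) hε
  set c := M * N * exp (-γ' * ‖latt (a - b)‖)
  have hle := hA.norm_mul_norm_le hγ' hM hN hB a b
  have hmaj : Summable fun k => c * exp (-(γ - γ') * ‖latt (a - k)‖) :=
    ((Equiv.subLeft a).summable_iff.2 hF).mul_left c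
  have hsum : Summable fun k => ‖A a k‖ * ‖B k b‖ :=
    hmaj.of_nonneg_of_le (fun _ => by positivity) hle
  refine ⟨hsum, ?_⟩
  have hsum' : Summable fun k => ‖A a k * B k b‖ := by simpa only [norm_mul] using hsum
  calc ‖∑' k, A a k * B k b‖ ≤ ∑' k, ‖A a k‖ * ‖B k b‖ := by
        simpa only [norm_mul] using norm_tsum_le_tsum_norm hsum'
    _ ≤ ∑' k, c * exp (-(γ - γ') * ‖latt (a - k)‖) := hsum.tsum_le_tsum hle hmaj
    _ = c * ∑' m : Fin d → ℤ, exp (-(γ - γ') * ‖latt m‖) := by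
        rw [tsum_mul_left, ← (Equiv.subLeft a).tsum_eq fun m => exp (-(γ - γ') * ‖latt m‖)]
        rfl
    _ ≤ c * (1 + 2 * (d + 1) / (γ - γ')) ^ d := by gcongr
    _ ≤ c * (3 * (d + 1) / (γ - γ')) ^ d := by
        have hε1 : 1 ≤ (d + 1) / (γ - γ') := by rw [le_div_iff₀ hε]; linarith
        gcongr
        linarith [show 3 * (d + 1) / (γ - γ') = 3 * ((d + 1) / (γ - γ')) by ring,
          show 2 * (d + 1) / (γ - γ') = 2 * ((d + 1) / (γ - γ')) by ring]
    _ = _ := by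
        rw [Real.rpow_neg hε.le, Real.rpow_natCast, div_pow]
        ring

end Lattice

theorem stmt_16_general (d : ℕ) :
    ∃ C : ℝ, 0 < C ∧ ∀ γ γ' : ℝ, 0 ≤ γ' → γ' < γ → γ ≤ 1 →
      ∀ M N : ℝ, 0 ≤ M → 0 ≤ N →
      ∀ A B : (Fin d → ℤ) → (Fin d → ℤ) → ℂ,
        (∀ a b, ‖A a b‖ ≤ M * Real.exp (-γ * ‖latt (a - b)‖)) →
        (∀ a b, ‖B a b‖ ≤ N * Real.exp (-γ' * ‖latt (a - b)‖)) →
        ∀ a b : Fin d → ℤ,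
          Summable (fun k => ‖A a k‖ * ‖B k b‖) ∧
          Summable (fun k => ‖B a k‖ * ‖A k b‖) ∧
          ‖∑' k, A a k * B k b‖ ≤
            C * (γ - γ') ^ (-(d : ℝ)) * M * N * Real.exp (-γ' * ‖latt (a - b)‖) ∧
          ‖∑' k, B a k * A k b‖ ≤
            C * (γ - γ') ^ (-(d : ℝ)) * M * N * Real.exp (-γ' * ‖latt (a - b)‖) := by
  refine ⟨(3 * (d + 1)) ^ d, by positivity, ?_⟩
  intro γ γ' hγ' hlt hγ M N hM hN A B hA hB a b
  have hA : ExpDecay γ M A := hA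
  have hB : ExpDecay γ' N B := hB
  obtain ⟨hAB, hAB_le⟩ := hA.summable_and_norm_tsum_mul_le hγ' hlt hγ hM hN hB a b
  obtain ⟨hBA, hBA_le⟩ :=
    hA.transpose.summable_and_norm_tsum_mul_le hγ' hlt hγ hM hN hB.transpose b a
  refine ⟨hAB, by simpa only [mul_comm] using hBA, hAB_le, ?_⟩
  simpa only [mul_comm (A _ _), norm_latt_sub, dist_comm] using hBA_le

/-- Multiplication estimate (2.4): if `|A(a,b)| ≤ M e^{−γ|a−b|}` and
`|B(a,b)| ≤ N e^{−γ'|a−b|}` with `0 ≤ γ' < γ ≤ 1`, then the matrix products `AB`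
and `BA` are absolutely convergent and satisfy
`|(AB)(a,b)|, |(BA)(a,b)| ≤ C (γ−γ')^{−d} M N e^{−γ'|a−b|}`,
with `C` depending only on `d`. -/
theorem stmt_16 (d : ℕ) (hd : 1 ≤ d) :
    ∃ C : ℝ, 0 < C ∧ ∀ γ γ' : ℝ, 0 ≤ γ' → γ' < γ → γ ≤ 1 →
      ∀ M N : ℝ, 0 ≤ M → 0 ≤ N →
      ∀ A B : (Fin d → ℤ) → (Fin d → ℤ) → ℂ,
        (∀ a b, ‖A a b‖ ≤ M * Real.exp (-γ * ‖latt (a - b)‖)) →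
        (∀ a b, ‖B a b‖ ≤ N * Real.exp (-γ' * ‖latt (a - b)‖)) →
        ∀ a b : Fin d → ℤ,
          Summable (fun k => ‖A a k‖ * ‖B k b‖) ∧
          Summable (fun k => ‖B a k‖ * ‖A k b‖) ∧
          ‖∑' k, A a k * B k b‖ ≤
            C * (γ - γ') ^ (-(d : ℝ)) * M * N * Real.exp (-γ' * ‖latt (a - b)‖) ∧
          ‖∑' k, B a k * A k b‖ ≤
            C * (γ - γ') ^ (-(d : ℝ)) * M * N * Real.exp (-γ' * ‖latt (a - b)‖) :=
  stmt_16_general d
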